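/- Green-type formula for the perturbed operator: if A_B is the self-adjoint operator defined by the Kreĭn resolvent formula R_z^B = R_z + G_z Λ_z^B G_{z̄}*, and ρ_B(R_z^B u) := (π₁*⊕1) Λ_z^B G_{z̄}* u (with π₁ the orthogonal projection onto the closure of ran(τ₁)), then for all u ∈ dom(A) and v ∈ dom(A_B): ⟨u, A_B v⟩_H = ⟨Au, v⟩_H + ⟨τu, ρ_B v⟩. -/

import Mathlib

open ComplexConjugate
noncomputable section

/-- `Rz` is the resolvent `(-A + z)⁻¹` of the (unbounded) operator `A` at `z`. -/
def IsResolventAt {H : Type*} [NormedAddCommGroup H] [InnerProductSpace ℂ H] [CompleteSpace H]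
    (A : H →ₗ.[ℂ] H) (z : ℂ) (Rz : H →L[ℂ] H) : Prop :=
  (∀ u : H, ∃ hu : Rz u ∈ A.domain, z • Rz u - A ⟨Rz u, hu⟩ = u) ∧
    ∀ x : A.domain, Rz (z • (x : H) - A x) = x

/-- The block-diagonal operator `P ⊕ Q` between Hilbertian direct sums. -/
def blockDiag {h1 h2 h1' h2' : Type*}
    [NormedAddCommGroup h1] [InnerProductSpace ℂ h1]
    [NormedAddCommGroup h2] [InnerProductSpace ℂ h2]
    [NormedAddCommGroup h1'] [InnerProductSpace ℂ h1']
    [NormedAddCommGroup h2'] [InnerProductSpace ℂ h2']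
    (P : h1 →L[ℂ] h1') (Q : h2 →L[ℂ] h2') :
    WithLp 2 (h1 × h2) →L[ℂ] WithLp 2 (h1' × h2') :=
  ((WithLp.prodContinuousLinearEquiv 2 ℂ h1' h2').symm.toContinuousLinearMap.comp
      (P.prodMap Q)).comp
    (WithLp.prodContinuousLinearEquiv 2 ℂ h1 h2).toContinuousLinearMap

/-- The pair `(φ₁, φ₂)` as an element of the Hilbertian direct sum. -/
def pairL2 {h1 h2 : Type*}
    [NormedAddCommGroup h1] [InnerProductSpace ℂ h1]
    [NormedAddCommGroup h2] [InnerProductSpace ℂ h2] (φ₁ : h1) (φ₂ : h2) :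
    WithLp 2 (h1 × h2) :=
  (WithLp.prodContinuousLinearEquiv 2 ℂ h1 h2).symm (φ₁, φ₂)

/-!
Put `f = (z - A_B) v` and `g = (z̄ - A) u`, so that `v = R^B_z f` and `u = R_{z̄} g`. The
resolvents of the symmetric operator `A` at `z` and `z̄` are adjoint to each other, so pairing `g`
with `v = R_z f + G_z Λ_z^B G_{z̄}* f` gives `⟨g, v⟩ = ⟨u, f⟩ + ⟨G_z* g, Λ_z^B G_{z̄}* f⟩`, where
`G_z* g = τ R_{z̄} g = τ u`. Expanding `f` and `g` gives the identity; `π₁` disappears because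
`τ₁ u` lies in the range it projects onto.
-/

theorem IsSelfAdjoint.isFormalAdjoint_self {𝕜 E : Type*} [RCLike 𝕜] [NormedAddCommGroup E]
    [InnerProductSpace 𝕜 E] [CompleteSpace E] {A : E →ₗ.[𝕜] E} (hA : IsSelfAdjoint A) :
    A.IsFormalAdjoint A := by
  simpa only [LinearPMap.isSelfAdjoint_def.mp hA] using
    LinearPMap.adjoint_isFormalAdjoint hA.dense_domain

namespace IsResolventAt

variable {H : Type*} [NormedAddCommGroup H] [InnerProductSpace ℂ H] [CompleteSpace H]
  {A : H →ₗ.[ℂ] H} {z : ℂ} {R R' : H →L[ℂ] H}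

theorem inner_apply_eq_inner_apply_of_conj (hA : A.IsFormalAdjoint A) (hR : IsResolventAt A z R)
    (hR' : IsResolventAt A (conj z) R') (x y : H) :
    inner ℂ (R' x) y = inner ℂ x (R y) := by
  obtain ⟨hx, hx_eq⟩ := hR'.1 x
  obtain ⟨hy, hy_eq⟩ := hR.1 y
  calc inner ℂ (R' x) y
      = inner ℂ (R' x) (z • R y - A ⟨R y, hy⟩) := by rw [hy_eq]
    _ = z * inner ℂ (R' x) (R y) - inner ℂ (A ⟨R' x, hx⟩) (R y) := by
        rw [inner_sub_right, inner_smul_right, hA ⟨R' x, hx⟩ ⟨R y, hy⟩]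
    _ = inner ℂ (conj z • R' x - A ⟨R' x, hx⟩) (R y) := by
        rw [inner_sub_left, inner_smul_left, Complex.conj_conj]
    _ = inner ℂ x (R y) := by rw [hx_eq]

theorem inner_apply_eq_add_inner_perturbation {AB : H →ₗ.[ℂ] H} {K : H →L[ℂ] H}
    (hA : A.IsFormalAdjoint A) (hR : IsResolventAt A z R) (hR' : IsResolventAt A (conj z) R')
    (hRK : IsResolventAt AB z (R + K)) (u : A.domain) (v : AB.domain) :
    inner ℂ (u : H) (AB v) =
      inner ℂ (A u) (v : H) + inner ℂ (conj z • (u : H) - A u) (K (z • (v : H) - AB v)) := by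
  set f := z • (v : H) - AB v
  set g := conj z • (u : H) - A u
  have hv : (R + K) f = v := hRK.2 v
  have hu : R' g = u := hR'.2 u
  have hg_v : inner ℂ g (v : H) = inner ℂ (u : H) f + inner ℂ g (K f) := by
    rw [← hv, add_apply, inner_add_right, ← hR.inner_apply_eq_inner_apply_of_conj hA hR', hu]
  have hAB_v : inner ℂ (u : H) (AB v) = z * inner ℂ (u : H) v - inner ℂ (u : H) f := by
    rw [show (AB v : H) = z • (v : H) - f by simp only [f, sub_sub_cancel], inner_sub_right,
      inner_smul_right]
  have hg_v' : inner ℂ g (v : H) = z * inner ℂ (u : H) v - inner ℂ (A u) (v : H) := by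
    simp only [g, inner_sub_left, inner_smul_left, Complex.conj_conj]
  linear_combination hAB_v - hg_v' + hg_v

end IsResolventAt

section blockDiag

variable {h1 h2 h1' h2' : Type*}
  [NormedAddCommGroup h1] [InnerProductSpace ℂ h1]
  [NormedAddCommGroup h2] [InnerProductSpace ℂ h2]
  [NormedAddCommGroup h1'] [InnerProductSpace ℂ h1']
  [NormedAddCommGroup h2'] [InnerProductSpace ℂ h2']

@[simp]
theorem blockDiag_apply_fst (P : h1 →L[ℂ] h1') (Q : h2 →L[ℂ] h2') (ψ : WithLp 2 (h1 × h2)) :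
    (blockDiag P Q ψ).ofLp.1 = P ψ.ofLp.1 :=
  rfl

@[simp]
theorem blockDiag_apply_snd (P : h1 →L[ℂ] h1') (Q : h2 →L[ℂ] h2') (ψ : WithLp 2 (h1 × h2)) :
    (blockDiag P Q ψ).ofLp.2 = Q ψ.ofLp.2 :=
  rfl

theorem blockDiag_pairL2 (P : h1 →L[ℂ] h1') (Q : h2 →L[ℂ] h2') (a : h1) (b : h2) :
    blockDiag P Q (pairL2 a b) = pairL2 (P a) (Q b) :=
  rfl

theorem inner_blockDiag_right [CompleteSpace h1] [CompleteSpace h2] [CompleteSpace h1']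
    [CompleteSpace h2'] (P : h1 →L[ℂ] h1') (Q : h2 →L[ℂ] h2')
    (φ : WithLp 2 (h1' × h2')) (ψ : WithLp 2 (h1 × h2)) :
    inner ℂ φ (blockDiag P Q ψ) = inner ℂ (blockDiag P.adjoint Q.adjoint φ) ψ := by
  simp only [WithLp.prod_inner_apply, blockDiag_apply_fst, blockDiag_apply_snd,
    ContinuousLinearMap.adjoint_inner_left]

end blockDiag

theorem statement_6_general
    {H h1 h2 h22 : Type*}
    [NormedAddCommGroup H] [InnerProductSpace ℂ H] [CompleteSpace H]
    [NormedAddCommGroup h1] [InnerProductSpace ℂ h1] [CompleteSpace h1]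
    [NormedAddCommGroup h2] [InnerProductSpace ℂ h2] [CompleteSpace h2]
    [NormedAddCommGroup h22] [InnerProductSpace ℂ h22]
    (A : H →ₗ.[ℂ] H) (hA : IsSelfAdjoint A)
    (R : ℂ → H →L[ℂ] H) (ρA : Set ℂ)
    (hρAres : ∀ z ∈ ρA, IsResolventAt A z (R z))
    (hρAconj : ∀ z ∈ ρA, conj z ∈ ρA)
    (τ₁ : A.domain →ₗ[ℂ] h1) (τ₂ : A.domain →ₗ[ℂ] h2)
    (T : ℂ → H →L[ℂ] WithLp 2 (h1 × h2))
    (hT : ∀ z ∈ ρA, ∀ (u : H) (hu : R z u ∈ A.domain),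
      T z u = pairL2 (τ₁ ⟨R z u, hu⟩) (τ₂ ⟨R z u, hu⟩))
    (G : ℂ → WithLp 2 (h1 × h2) →L[ℂ] H)
    (hG : ∀ z ∈ ρA, G z = (T (conj z)).adjoint)
    (N : ℂ → WithLp 2 (h1 × h2) →L[ℂ] WithLp 2 (h1 × h2))
    (B₀ : h2 →L[ℂ] h22) (B₁ : h1 →L[ℂ] h1) (B₂ : h2 →L[ℂ] h22)
    (Minv : ℂ → WithLp 2 (h1 × h22) →L[ℂ] WithLp 2 (h1 × h2))
    (ZB : Set ℂ)
    (hZB : ZB = {z ∈ ρA | ∀ w ∈ ({z, conj z} : Set ℂ),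
      (Minv w).comp (blockDiag (1 : h1 →L[ℂ] h1) B₀ - (blockDiag B₁ B₂).comp (N w)) = 1 ∧
      (blockDiag (1 : h1 →L[ℂ] h1) B₀ - (blockDiag B₁ B₂).comp (N w)).comp (Minv w) = 1})
    (hZBne : ZB.Nonempty)
    (AB : H →ₗ.[ℂ] H)
    (hABres : ∀ z ∈ ZB, IsResolventAt AB z
      (R z + ((G z).comp ((Minv z).comp (blockDiag B₁ B₂))).comp ((G (conj z)).adjoint)))
    (P1 : h1 →L[ℂ] h1) (hP1sa : IsSelfAdjoint P1)
    (hP1fix : ∀ y ∈ closure (Set.range fun x : A.domain => τ₁ x), P1 y = y)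
    (ρB : AB.domain →ₗ[ℂ] WithLp 2 (h1 × h2))
    (hρB : ∀ z ∈ ZB, ∀ (u : H)
      (hu : (R z + ((G z).comp ((Minv z).comp (blockDiag B₁ B₂))).comp
        ((G (conj z)).adjoint)) u ∈ AB.domain),
      ρB ⟨(R z + ((G z).comp ((Minv z).comp (blockDiag B₁ B₂))).comp
        ((G (conj z)).adjoint)) u, hu⟩
        = blockDiag P1 (1 : h2 →L[ℂ] h2)
            ((Minv z) ((blockDiag B₁ B₂) ((G (conj z)).adjoint u))))
    :
    ∀ (u : A.domain) (v : AB.domain),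
      (inner ℂ ((u : H)) ((AB v : H)) : ℂ)
        = (inner ℂ ((A u : H)) ((v : H)) : ℂ)
          + (inner ℂ (pairL2 (τ₁ u) (τ₂ u)) (ρB v) : ℂ) := by
  intro u v
  obtain ⟨z, hz⟩ := hZBne
  have hzρ : z ∈ ρA := (hZB ▸ hz).1
  have hzρ' : conj z ∈ ρA := hρAconj z hzρ
  set f := z • (v : H) - AB v
  set g := conj z • (u : H) - A u
  have hv : (R z + ((G z).comp ((Minv z).comp (blockDiag B₁ B₂))).comp
      (G (conj z)).adjoint) f = v := (hABres z hz).2 v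
  have hu : R (conj z) g = u := (hρAres _ hzρ').2 u
  have hGg : (G z).adjoint g = pairL2 (τ₁ u) (τ₂ u) := by
    rw [hG z hzρ, ContinuousLinearMap.adjoint_adjoint]
    exact (hT _ hzρ' g (hu ▸ u.2)).trans
      (congrArg (fun x => pairL2 (τ₁ x) (τ₂ x)) (Subtype.ext hu))
  have hρBv : ρB v = blockDiag P1 1 (Minv z (blockDiag B₁ B₂ ((G (conj z)).adjoint f))) :=
    (congrArg ρB (Subtype.ext hv).symm).trans (hρB z hz f (hv ▸ v.2))
  have hP1τ : P1 (τ₁ u) = τ₁ u := hP1fix _ (subset_closure ⟨u, rfl⟩)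
  rw [(hρAres z hzρ).inner_apply_eq_add_inner_perturbation hA.isFormalAdjoint_self
    (hρAres _ hzρ') (hABres z hz) u v, hρBv, inner_blockDiag_right, hP1sa.adjoint_eq,
    ContinuousLinearMap.adjoint_one, blockDiag_pairL2, one_apply_eq_self, hP1τ, ← hGg]
  simp only [ContinuousLinearMap.comp_apply, ContinuousLinearMap.adjoint_inner_left]
  rfl

/-- **Green-type formula.** In the abstract Kreĭn setting, with
`ρ_B(R^B_z u) := (π₁* ⊕ 1) Λ_z^B G_{z̄}* u` (`π₁` the orthogonal projection onto the closure of
`ran τ₁`), for all `u ∈ dom A` and `v ∈ dom A_B`: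
`⟨u, A_B v⟩ = ⟨A u, v⟩ + ⟨τ u, ρ_B v⟩`. -/
theorem statement_6
    {H h1 h2 h22 : Type*}
    [NormedAddCommGroup H] [InnerProductSpace ℂ H] [CompleteSpace H]
    [NormedAddCommGroup h1] [InnerProductSpace ℂ h1] [CompleteSpace h1]
    [NormedAddCommGroup h2] [InnerProductSpace ℂ h2] [CompleteSpace h2]
    [NormedAddCommGroup h22] [InnerProductSpace ℂ h22] [CompleteSpace h22]
    (A : H →ₗ.[ℂ] H) (hA : IsSelfAdjoint A)
    (R : ℂ → H →L[ℂ] H) (ρA : Set ℂ)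
    (hρA : ρA = {z : ℂ | ∃ Q : H →L[ℂ] H, IsResolventAt A z Q})
    (hρAres : ∀ z ∈ ρA, IsResolventAt A z (R z))
    (hρAconj : ∀ z ∈ ρA, conj z ∈ ρA)
    (τ₁ : A.domain →ₗ[ℂ] h1) (τ₂ : A.domain →ₗ[ℂ] h2)
    (hτbdd : ∃ C : ℝ, ∀ x : A.domain, ‖τ₁ x‖ + ‖τ₂ x‖ ≤ C * (‖(x : H)‖ + ‖A x‖))
    (hker₂ : Dense {u : H | ∃ hu : u ∈ A.domain, τ₂ ⟨u, hu⟩ = 0})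
    (hran₂ : DenseRange τ₂)
    (T : ℂ → H →L[ℂ] WithLp 2 (h1 × h2))
    (hT : ∀ z ∈ ρA, ∀ (u : H) (hu : R z u ∈ A.domain),
      T z u = pairL2 (τ₁ ⟨R z u, hu⟩) (τ₂ ⟨R z u, hu⟩))
    (G : ℂ → WithLp 2 (h1 × h2) →L[ℂ] H)
    (hG : ∀ z ∈ ρA, G z = (T (conj z)).adjoint)
    (N : ℂ → WithLp 2 (h1 × h2) →L[ℂ] WithLp 2 (h1 × h2))
    (hNext : ∀ z ∈ ρA, ∀ (φ : WithLp 2 (h1 × h2)) (hφ : G z φ ∈ A.domain),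
      N z φ = pairL2 (τ₁ ⟨G z φ, hφ⟩) (τ₂ ⟨G z φ, hφ⟩))
    (hNadj : ∀ z ∈ ρA, (N z).adjoint = N (conj z))
    (hNdiff : ∀ z ∈ ρA, ∀ w ∈ ρA,
      N w - N z = (z - w) • (((G (conj w)).adjoint).comp (G z)))
    (B₀ : h2 →L[ℂ] h22) (B₁ : h1 →L[ℂ] h1) (B₂ : h2 →L[ℂ] h22)
    (hB₁ : IsSelfAdjoint B₁) (hB₀₂ : B₀.comp B₂.adjoint = B₂.comp B₀.adjoint)
    (Minv : ℂ → WithLp 2 (h1 × h22) →L[ℂ] WithLp 2 (h1 × h2))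
    (ZB : Set ℂ)
    (hZB : ZB = {z ∈ ρA | ∀ w ∈ ({z, conj z} : Set ℂ),
      (Minv w).comp (blockDiag (1 : h1 →L[ℂ] h1) B₀ - (blockDiag B₁ B₂).comp (N w)) = 1 ∧
      (blockDiag (1 : h1 →L[ℂ] h1) B₀ - (blockDiag B₁ B₂).comp (N w)).comp (Minv w) = 1})
    (hZBne : ZB.Nonempty)
    (AB : H →ₗ.[ℂ] H) (hAB : IsSelfAdjoint AB)
    (hABres : ∀ z ∈ ZB, IsResolventAt AB z
      (R z + ((G z).comp ((Minv z).comp (blockDiag B₁ B₂))).comp ((G (conj z)).adjoint)))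
    (P1 : h1 →L[ℂ] h1) (hP1sa : IsSelfAdjoint P1) (hP1idem : P1.comp P1 = P1)
    (hP1mem : ∀ y : h1, P1 y ∈ closure (Set.range fun x : A.domain => τ₁ x))
    (hP1fix : ∀ y ∈ closure (Set.range fun x : A.domain => τ₁ x), P1 y = y)
    (ρB : AB.domain →ₗ[ℂ] WithLp 2 (h1 × h2))
    (hρB : ∀ z ∈ ZB, ∀ (u : H)
      (hu : (R z + ((G z).comp ((Minv z).comp (blockDiag B₁ B₂))).comp
        ((G (conj z)).adjoint)) u ∈ AB.domain),
      ρB ⟨(R z + ((G z).comp ((Minv z).comp (blockDiag B₁ B₂))).comp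
        ((G (conj z)).adjoint)) u, hu⟩
        = blockDiag P1 (1 : h2 →L[ℂ] h2)
            ((Minv z) ((blockDiag B₁ B₂) ((G (conj z)).adjoint u))))
    :
    ∀ (u : A.domain) (v : AB.domain),
      (inner ℂ ((u : H)) ((AB v : H)) : ℂ)
        = (inner ℂ ((A u : H)) ((v : H)) : ℂ)
          + (inner ℂ (pairL2 (τ₁ u) (τ₂ u)) (ρB v) : ℂ) :=
  statement_6_general A hA R ρA hρAres hρAconj τ₁ τ₂ T hT G hG N B₀ B₁ B₂ Minv ZB hZB hZBne AB
    hABres P1 hP1sa hP1fix ρB hρB
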